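/- Let S be a continuous inverse semigroup with zero and let s, t ∈ S. Then the following are equivalent: (1) Ω_{s⋆ * s} = Ω_{t⋆ * t} and λ_s(ξ) = λ_t(ξ) for every ξ ∈ Ω_{s⋆ * s} (i.e. λ_s = λ_t as partially defined bijections on Ω); (2) s * t⋆ * t = t * s⋆ * s, and the idempotent s⋆ * s * t⋆ * t is dense in both s⋆ * s and t⋆ * t; (3) t * t⋆ * s = s * s⋆ * t, and the idempotent s * s⋆ * t * t⋆ is dense in both s * s⋆ and t * t⋆. -/
import Mathlib


/-- An inverse semigroup with zero: every element `s` has a unique generalized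
inverse `star s`, and `0` is absorbing. -/
class InverseSemigroupWithZero (S : Type*) extends Semigroup S, Zero S, Star S where
  zero_mul : ∀ s : S, 0 * s = 0
  mul_zero : ∀ s : S, s * 0 = 0
  mul_star_mul_self : ∀ s : S, s * star s * s = s
  star_mul_self_star : ∀ s : S, star s * s * star s = star s
  star_unique : ∀ s x : S, s * x * s = s → x * s * x = x → x = star s

variable {S : Type*} [InverseSemigroupWithZero S]

/-- The natural partial order on an inverse semigroup: `s ≤ t` iff `t * s⋆ * s = s`. -/
def natLe (s t : S) : Prop := t * star s * s = s

/-- A filter in the inverse semigroup `S` (w.r.t. the natural partial order). -/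
def IsFilterS (ξ : Set S) : Prop :=
  ξ.Nonempty ∧ (0 : S) ∉ ξ ∧
    (∀ x ∈ ξ, ∀ y : S, natLe x y → y ∈ ξ) ∧
    ∀ x ∈ ξ, ∀ y ∈ ξ, ∃ z ∈ ξ, natLe z x ∧ natLe z y

/-- An ultrafilter: a filter maximal under inclusion. -/
def IsUltraS (ξ : Set S) : Prop :=
  IsFilterS ξ ∧ ∀ η : Set S, IsFilterS η → ξ ⊆ η → η = ξ

/-- The set `Ω` of all ultrafilters in `S`. -/
def OmegaAll (S : Type*) [InverseSemigroupWithZero S] : Set (Set S) := {ξ | IsUltraS ξ}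

/-- `Ω_e`: the set of ultrafilters `ξ` with `eξ ⊆ ξ`. -/
def OmegaE (e : S) : Set (Set S) := {ξ | IsUltraS ξ ∧ ∀ t ∈ ξ, e * t ∈ ξ}

/-- The map `λₛ` on filters. -/
def lambdaMap (s : S) (ξ : Set S) : Set S := {u | ∃ t ∈ ξ, natLe (s * t) u}

/-- `y` is dense in `x` (for idempotents `y ≤ x`): there is no nonzero idempotent
`z ≤ x` with `z * y = 0`. -/
def DenseIn (y x : S) : Prop :=
  ∀ z : S, IsIdempotentElem z → z * x = z → z * y = 0 → z = 0

/-- `s` essentially coincides with `t`. -/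
def EssEq (s t : S) : Prop :=
  star s * s = star t * t ∧
    ∀ f : S, IsIdempotentElem f → f ≠ 0 → f * (star s * s) = f →
      ∃ e : S, IsIdempotentElem e ∧ e ≠ 0 ∧ e * f = e ∧ s * e = t * e

namespace ISW

lemma sms (s : S) : s * star s * s = s := InverseSemigroupWithZero.mul_star_mul_self s
lemma sss (s : S) : star s * s * star s = star s := InverseSemigroupWithZero.star_mul_self_star s
lemma suniq {s x : S} (h1 : s * x * s = s) (h2 : x * s * x = x) : x = star s :=
  InverseSemigroupWithZero.star_unique s x h1 h2
lemma zmul (s : S) : (0:S) * s = 0 := InverseSemigroupWithZero.zero_mul s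
lemma mulz (s : S) : s * (0:S) = 0 := InverseSemigroupWithZero.mul_zero s

lemma star_star (s : S) : star (star s) = s :=
  (suniq (sss s) (sms s)).symm

lemma star_zero : star (0:S) = (0:S) :=
  (suniq (by simp [zmul, mulz]) (by simp [zmul, mulz])).symm

lemma idem_star_mul (s : S) : IsIdempotentElem (star s * s) := by
  show star s * s * (star s * s) = star s * s
  calc star s * s * (star s * s) = star s * (s * star s * s) := by
        simp [mul_assoc]
    _ = star s * s := by rw [sms]

lemma idem_mul_star (s : S) : IsIdempotentElem (s * star s) := by
  show s * star s * (s * star s) = s * star s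
  calc s * star s * (s * star s) = s * (star s * s * star s) := by simp [mul_assoc]
    _ = s * star s := by rw [sss]

lemma star_of_idem {e : S} (he : IsIdempotentElem e) : star e = e := by
  have h : e * e * e = e := by rw [he.eq, he.eq]
  exact (suniq h h).symm

lemma midem {a : S} (ha : IsIdempotentElem a) (x : S) : a * (a * x) = a * x := by
  rw [← mul_assoc, ha.eq]

/-- idempotents commute -/
lemma idem_comm {e f : S} (he : IsIdempotentElem e) (hf : IsIdempotentElem f) :
    e * f = f * e := by
  -- first: the product of two idempotents is idempotent
  have key : ∀ a b : S, IsIdempotentElem a → IsIdempotentElem b → IsIdempotentElem (a * b) := by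
    intro a b ha hb
    set c := star (a * b) with hc
    have h1 : b * c * a = c := by
      apply suniq
      · have : a * b * (b * c * a) * (a * b) = a * b * c * (a * b) := by
          simp only [mul_assoc]; rw [midem hb, midem ha]
        rw [this]; exact sms (a*b)
      · have : b * c * a * (a * b) * (b * c * a) = b * (c * (a * b) * c) * a := by
          simp only [mul_assoc]; rw [midem ha, midem hb]
        rw [this, sss (a*b)]
    have hcc : IsIdempotentElem c := by
      show c * c = c
      conv_lhs => rw [← h1]
      calc b * c * a * (b * c * a)
          = b * (c * (a * b) * c) * a := by simp [mul_assoc]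
        _ = b * c * a := by rw [sss (a*b)]
        _ = c := h1
    have h2 : a * b = star c := by
      apply suniq
      · exact sss (a*b)
      · exact sms (a*b)
    have h3 : c = star c := by
      apply suniq
      · rw [hcc.eq, hcc.eq]
      · rw [hcc.eq, hcc.eq]
    have : a * b = c := h2.trans h3.symm
    rw [this]; exact hcc
  have hef : IsIdempotentElem (e * f) := key e f he hf
  have hfe : IsIdempotentElem (f * e) := key f e hf he
  have : f * e = star (e * f) := by
    apply suniq
    · calc e * f * (f * e) * (e * f)
          = e * (f * f) * (e * e) * f := by simp [mul_assoc]
        _ = (e * f) * (e * f) := by rw [he.eq, hf.eq]; simp [mul_assoc]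
        _ = e * f := hef.eq
    · calc f * e * (e * f) * (f * e)
          = f * (e * e) * (f * f) * e := by simp [mul_assoc]
        _ = (f * e) * (f * e) := by rw [he.eq, hf.eq]; simp [mul_assoc]
        _ = f * e := hfe.eq
  rw [this, star_of_idem hef]

lemma idem_mul {e f : S} (he : IsIdempotentElem e) (hf : IsIdempotentElem f) :
    IsIdempotentElem (e * f) := by
  show e * f * (e * f) = e * f
  calc e * f * (e * f) = e * (f * e) * f := by simp [mul_assoc]
    _ = e * (e * f) * f := by rw [idem_comm he hf]
    _ = (e * e) * (f * f) := by simp [mul_assoc]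
    _ = e * f := by rw [he.eq, hf.eq]

lemma star_mul (a b : S) : star (a * b) = star b * star a := by
  symm; apply suniq
  · calc a * b * (star b * star a) * (a * b)
        = a * (b * star b * (star a * a)) * b := by simp [mul_assoc]
      _ = a * (star a * a * (b * star b)) * b := by
          rw [idem_comm (idem_mul_star b) (idem_star_mul a)]
      _ = (a * star a * a) * (b * star b * b) := by simp [mul_assoc]
      _ = a * b := by rw [sms, sms]
  · calc star b * star a * (a * b) * (star b * star a)
        = star b * (star a * a * (b * star b)) * star a := by simp [mul_assoc]
      _ = star b * (b * star b * (star a * a)) * star a := by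
          rw [idem_comm (idem_star_mul a) (idem_mul_star b)]
      _ = (star b * b * star b) * (star a * a * star a) := by simp [mul_assoc]
      _ = star b * star a := by rw [sss, sss]

end ISW

namespace ISW

lemma sms' (s x : S) : s * (star s * (s * x)) = s * x := by
  rw [← mul_assoc, ← mul_assoc, sms]
lemma sss' (s x : S) : star s * (s * (star s * x)) = star s * x := by
  rw [← mul_assoc, ← mul_assoc, sss]
lemma smsr (s : S) : s * (star s * s) = s := by rw [← mul_assoc, sms]
lemma sssr (s : S) : star s * (s * star s) = star s := by rw [← mul_assoc, sss]

lemma comm11 {p q : S} (h : p * q = q * p) (x : S) :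
    p * (q * x) = q * (p * x) := by
  simpa only [mul_assoc] using congrArg (· * x) h
lemma comm12 {p q₁ q₂ : S} (h : p * (q₁ * q₂) = q₁ * q₂ * p) (x : S) :
    p * (q₁ * (q₂ * x)) = q₁ * (q₂ * (p * x)) := by
  simpa only [mul_assoc] using congrArg (· * x) h
lemma comm21 {p₁ p₂ q : S} (h : p₁ * p₂ * q = q * (p₁ * p₂)) (x : S) :
    p₁ * (p₂ * (q * x)) = q * (p₁ * (p₂ * x)) := by
  simpa only [mul_assoc] using congrArg (· * x) h
lemma comm22 {p₁ p₂ q₁ q₂ : S} (h : p₁ * p₂ * (q₁ * q₂) = q₁ * q₂ * (p₁ * p₂)) (x : S) :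
    p₁ * (p₂ * (q₁ * (q₂ * x))) = q₁ * (q₂ * (p₁ * (p₂ * x))) := by
  simpa only [mul_assoc] using congrArg (· * x) h
lemma comm22e {p₁ p₂ q₁ q₂ : S} (h : p₁ * p₂ * (q₁ * q₂) = q₁ * q₂ * (p₁ * p₂)) :
    p₁ * (p₂ * (q₁ * q₂)) = q₁ * (q₂ * (p₁ * p₂)) := by
  simpa only [mul_assoc] using h

lemma natLe_refl (a : S) : natLe a a := sms a

lemma natLe_zero {a : S} (h : natLe a 0) : a = 0 := by
  unfold natLe at h; rw [zmul, zmul] at h; exact h.symm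

/-- `a ≤ b` implies `a = a a⋆ b`. -/
lemma le_alt {a b : S} (h : natLe a b) : a * star a * b = a := by
  have hstar : star a * (a * star b) = star a := by
    have h' := congrArg star h
    rwa [star_mul, star_mul, star_star] at h'
  simp only [mul_assoc]
  nth_rewrite 1 [← h]
  simp only [mul_assoc]
  rw [sss' a b, ← hstar]
  simp only [mul_assoc]
  rw [comm22e (idem_comm (idem_star_mul a) (idem_star_mul b)), sms' b, ← mul_assoc]
  exact h

lemma alt_le {a b : S} (h : a * star a * b = a) : natLe a b := by
  have hstar : star b * (a * star a) = star a := by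
    have h' := congrArg star h
    rwa [star_mul, star_mul, star_star] at h'
  have h' : a * (star a * b) = a := by rw [← mul_assoc]; exact h
  show b * star a * a = a
  rw [mul_assoc, ← hstar]
  simp only [mul_assoc]
  rw [comm22 (idem_comm (idem_mul_star b) (idem_mul_star a))]
  nth_rewrite 3 [← h']
  rw [comm22 (idem_comm (idem_mul_star b) (idem_mul_star a))]
  rw [sss' a, smsr b]
  exact h'

lemma natLe_trans {a b c : S} (hab : natLe a b) (hbc : natLe b c) : natLe a c := by
  have hab' : b * (star a * a) = a := by rw [← mul_assoc]; exact hab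
  have haux : star a * (a * star b) = star a := by
    have h' := congrArg star hab
    rwa [star_mul, star_mul, star_star] at h'
  show c * star a * a = a
  rw [mul_assoc, ← haux]
  simp only [mul_assoc]
  nth_rewrite 3 [← hab']
  rw [comm22 (idem_comm (idem_star_mul a) (idem_star_mul b)), sss' a]
  rw [← mul_assoc, ← mul_assoc, hbc]
  exact hab'

/-- `d * f ≤ d` for an idempotent `f`. -/
lemma mul_idem_le {f : S} (hf : IsIdempotentElem f) (d : S) : natLe (d * f) d := by
  show d * star (d * f) * (d * f) = d * f
  rw [star_mul, star_of_idem hf]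
  simp only [mul_assoc]
  rw [comm12 (idem_comm hf (idem_star_mul d)), sms' d, hf.eq]

/-- `p * d ≤ d` for an idempotent `p`. -/
lemma idem_mul_le {p : S} (hp : IsIdempotentElem p) (d : S) : natLe (p * d) d := by
  show d * star (p * d) * (p * d) = p * d
  rw [star_mul, star_of_idem hp]
  simp only [mul_assoc]
  rw [midem hp, comm21 (idem_comm (idem_mul_star d) hp), smsr d]

lemma natLe_mul_left {a b : S} (c : S) (h : natLe a b) : natLe (c * a) (c * b) := by
  have key : c * b * (star a * a) = c * a := by
    rw [mul_assoc, ← mul_assoc b, h]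
  rw [← key]; exact mul_idem_le (idem_star_mul a) _

lemma natLe_mul_right {a b : S} (c : S) (h : natLe a b) : natLe (a * c) (b * c) := by
  have key : a * star a * (b * c) = a * c := by rw [← mul_assoc, le_alt h]
  rw [← key]; exact idem_mul_le (idem_mul_star a) _

/-- order on idempotents -/
lemma idem_le_iff {p q : S} (hp : IsIdempotentElem p) : natLe p q ↔ q * p = p := by
  unfold natLe; rw [star_of_idem hp, mul_assoc, hp.eq]

lemma idem_absorb_left {p q : S} (hp : IsIdempotentElem p) (hq : IsIdempotentElem q)
    (h : natLe p q) : p * q = p := by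
  rw [idem_comm hp hq]; exact (idem_le_iff hp).mp h

/-- anything below an idempotent is idempotent -/
lemma le_idem_idem {r f : S} (hf : IsIdempotentElem f) (h : natLe r f) :
    IsIdempotentElem r := by
  have key : r = f * (star r * r) := by rw [← mul_assoc]; exact h.symm
  rw [key]; exact idem_mul hf (idem_star_mul r)

/-- for idempotent f, r ≤ f implies f * r = r -/
lemma idem_mul_of_le {r f : S} (hf : IsIdempotentElem f) (h : natLe r f) : f * r = r := by
  conv_lhs => rw [← h]
  simp only [mul_assoc]
  rw [midem hf, ← mul_assoc]
  exact h

end ISW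


namespace ISW

lemma mem_ne_zero {ξ : Set S} (hf : IsFilterS ξ) {a : S} (ha : a ∈ ξ) : a ≠ 0 :=
  fun h => hf.2.1 (h ▸ ha)

lemma upSet_filter {a : S} (ha : a ≠ 0) : IsFilterS {v : S | natLe a v} := by
  refine ⟨⟨a, natLe_refl a⟩, ?_, ?_, ?_⟩
  · intro h0; exact ha (natLe_zero h0)
  · intro x hx y hxy; exact natLe_trans hx hxy
  · intro x hx y hy; exact ⟨a, natLe_refl a, hx, hy⟩

/-- every filter extends to an ultrafilter -/
lemma exists_ultra_of_filter {ξ₀ : Set S} (h0 : IsFilterS ξ₀) :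
    ∃ ξ : Set S, IsUltraS ξ ∧ ξ₀ ⊆ ξ := by
  have hchainub : ∀ c ⊆ {η : Set S | IsFilterS η}, IsChain (· ⊆ ·) c → c.Nonempty →
      ∃ ub ∈ {η : Set S | IsFilterS η}, ∀ s ∈ c, s ⊆ ub := by
    intro c hc hchain hne
    refine ⟨⋃₀ c, ?_, fun s hs => Set.subset_sUnion_of_mem hs⟩
    obtain ⟨η₀, hη₀⟩ := hne
    have hη₀f : IsFilterS η₀ := hc hη₀
    refine ⟨?_, ?_, ?_, ?_⟩
    · obtain ⟨a, ha⟩ := hη₀f.1; exact ⟨a, Set.mem_sUnion.2 ⟨η₀, hη₀, ha⟩⟩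
    · rintro ⟨η, hη, h0mem⟩
      exact (hc hη).2.1 h0mem
    · rintro x ⟨η, hη, hx⟩ y hxy
      exact ⟨η, hη, (hc hη).2.2.1 x hx y hxy⟩
    · rintro x ⟨η₁, hη₁, hx⟩ y ⟨η₂, hη₂, hy⟩
      rcases hchain.total hη₁ hη₂ with h12 | h21
      · obtain ⟨z, hz, hzx, hzy⟩ := (hc hη₂).2.2.2 x (h12 hx) y hy
        exact ⟨z, ⟨η₂, hη₂, hz⟩, hzx, hzy⟩
      · obtain ⟨z, hz, hzx, hzy⟩ := (hc hη₁).2.2.2 x hx y (h21 hy)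
        exact ⟨z, ⟨η₁, hη₁, hz⟩, hzx, hzy⟩
  obtain ⟨m, hsub, hm⟩ := zorn_subset_nonempty {η : Set S | IsFilterS η} hchainub ξ₀ h0
  refine ⟨m, ⟨hm.1, ?_⟩, hsub⟩
  intro η hη hmη
  exact (hm.2 hη hmη).antisymm hmη

lemma exists_ultra {a : S} (ha : a ≠ 0) : ∃ ξ : Set S, IsUltraS ξ ∧ a ∈ ξ := by
  obtain ⟨ξ, hξ, hsub⟩ := exists_ultra_of_filter (upSet_filter ha)
  exact ⟨ξ, hξ, hsub (natLe_refl a)⟩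

/-- an ultrafilter containing an idempotent z lies in Ω_z -/
lemma ultra_mem_omega_of_idem {ξ : Set S} (hξ : IsUltraS ξ) {z : S}
    (hz : IsIdempotentElem z) (hmem : z ∈ ξ) : ξ ∈ OmegaE z := by
  refine ⟨hξ, fun u hu => ?_⟩
  obtain ⟨w, hw, hwz, hwu⟩ := hξ.1.2.2.2 z hmem u hu
  have h1 : z * w = w := idem_mul_of_le hz hwz
  have h2 : natLe (z * w) (z * u) := natLe_mul_left z hwu
  rw [h1] at h2
  exact hξ.1.2.2.1 w hw _ h2

/-- Ω is monotone in the idempotent -/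
lemma omega_mono {p q : S} (hp : IsIdempotentElem p) (h : natLe p q) :
    OmegaE p ⊆ OmegaE q := by
  rintro ξ ⟨hξ, hmul⟩
  refine ⟨hξ, fun u hu => ?_⟩
  have h1 : natLe (p * u) (q * u) := natLe_mul_right u h
  exact hξ.1.2.2.1 _ (hmul u hu) _ h1

/-- membership criterion for Ω_x (Fact A) -/
lemma mem_omega_of_ne_zero {ξ : Set S} (hξ : IsUltraS ξ) {x : S} (hx : IsIdempotentElem x)
    (h : ∀ u ∈ ξ, x * u ≠ 0) : ξ ∈ OmegaE x := by
  have hfil : IsFilterS {v : S | ∃ u ∈ ξ, natLe (x * u) v} := by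
    refine ⟨?_, ?_, ?_, ?_⟩
    · obtain ⟨a, ha⟩ := hξ.1.1
      exact ⟨x * a, a, ha, natLe_refl _⟩
    · rintro ⟨u, hu, h0⟩
      exact h u hu (natLe_zero h0)
    · rintro v ⟨u, hu, huv⟩ w hvw
      exact ⟨u, hu, natLe_trans huv hvw⟩
    · rintro v ⟨u₁, hu₁, h1⟩ w ⟨u₂, hu₂, h2⟩
      obtain ⟨u₃, hu₃, h31, h32⟩ := hξ.1.2.2.2 u₁ hu₁ u₂ hu₂
      exact ⟨x * u₃, ⟨u₃, hu₃, natLe_refl _⟩,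
        natLe_trans (natLe_mul_left x h31) h1, natLe_trans (natLe_mul_left x h32) h2⟩
  have hsub : ξ ⊆ {v : S | ∃ u ∈ ξ, natLe (x * u) v} :=
    fun u hu => ⟨u, hu, idem_mul_le hx u⟩
  have := hξ.2 _ hfil hsub
  refine ⟨hξ, fun u hu => ?_⟩
  rw [← this]
  exact ⟨u, hu, natLe_refl _⟩

end ISW

namespace ISW

/-- if c ≤ s * d then s s⋆ c = c -/
lemma absorb_of_le_mul {s c d : S} (h : natLe c (s * d)) : s * (star s * c) = c := by
  have h' : s * (d * (star c * c)) = c := by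
    have h2 := h; unfold natLe at h2; simp only [mul_assoc] at h2; exact h2
  conv_lhs => rw [← h']
  rw [sms' s]
  exact h'

/-- λₛ maps Ω_{s⋆s} into Ω_{ss⋆} -/
lemma lambda_ultra {s : S} {ξ : Set S} (hξ : ξ ∈ OmegaE (star s * s)) :
    lambdaMap s ξ ∈ OmegaE (s * star s) := by
  obtain ⟨hu, hmul⟩ := hξ
  have hne0 : ∀ r ∈ ξ, s * r ≠ 0 := by
    intro r hr h0
    have : star s * s * r ∈ ξ := hmul r hr
    rw [mul_assoc, h0, mulz] at this
    exact hu.1.2.1 this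
  have hfil : IsFilterS (lambdaMap s ξ) := by
    refine ⟨?_, ?_, ?_, ?_⟩
    · obtain ⟨a, ha⟩ := hu.1.1
      exact ⟨s * a, a, ha, natLe_refl _⟩
    · rintro ⟨r, hr, h0⟩
      exact hne0 r hr (natLe_zero h0)
    · rintro v ⟨r, hr, hrv⟩ w hvw
      exact ⟨r, hr, natLe_trans hrv hvw⟩
    · rintro v ⟨r₁, hr₁, h1⟩ w ⟨r₂, hr₂, h2⟩
      obtain ⟨r₃, hr₃, h31, h32⟩ := hu.1.2.2.2 r₁ hr₁ r₂ hr₂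
      exact ⟨s * r₃, ⟨r₃, hr₃, natLe_refl _⟩,
        natLe_trans (natLe_mul_left s h31) h1, natLe_trans (natLe_mul_left s h32) h2⟩
  have hult : IsUltraS (lambdaMap s ξ) := by
    refine ⟨hfil, ?_⟩
    intro η hη hsubη
    -- the pullback of η along s is a filter containing ξ, hence equals ξ
    have hηp : IsFilterS {w : S | ∃ v ∈ η, natLe (star s * v) w} := by
      refine ⟨?_, ?_, ?_, ?_⟩
      · obtain ⟨v, hv⟩ := hη.1
        exact ⟨star s * v, v, hv, natLe_refl _⟩
      · rintro ⟨v, hv, h0⟩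
        -- find c ∈ η with c ≤ v and c ≤ s * r₀
        obtain ⟨a, ha⟩ := hu.1.1
        have hsa : s * a ∈ η := hsubη ⟨a, ha, natLe_refl _⟩
        obtain ⟨c, hc, hcv, hcs⟩ := hη.2.2.2 v hv (s * a) hsa
        have hc0 : c = 0 := by
          rw [← absorb_of_le_mul hcs]
          have : natLe (star s * c) (star s * v) := natLe_mul_left _ hcv
          rw [natLe_zero h0] at this
          rw [natLe_zero this, mulz]
        exact hη.2.1 (hc0 ▸ hc)
      · rintro w ⟨v, hv, hvw⟩ w' hww'
        exact ⟨v, hv, natLe_trans hvw hww'⟩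
      · rintro w₁ ⟨v₁, hv₁, h1⟩ w₂ ⟨v₂, hv₂, h2⟩
        obtain ⟨v₃, hv₃, h31, h32⟩ := hη.2.2.2 v₁ hv₁ v₂ hv₂
        exact ⟨star s * v₃, ⟨v₃, hv₃, natLe_refl _⟩,
          natLe_trans (natLe_mul_left _ h31) h1, natLe_trans (natLe_mul_left _ h32) h2⟩
    have hsubξ : ξ ⊆ {w : S | ∃ v ∈ η, natLe (star s * v) w} := by
      intro r hr
      refine ⟨s * r, hsubη ⟨r, hr, natLe_refl _⟩, ?_⟩
      rw [← mul_assoc]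
      exact idem_mul_le (idem_star_mul s) r
    have hpη : {w : S | ∃ v ∈ η, natLe (star s * v) w} = ξ := hu.2 _ hηp hsubξ
    -- now show η ⊆ lambdaMap s ξ
    apply Set.Subset.antisymm _ hsubη
    intro v hv
    obtain ⟨a, ha⟩ := hu.1.1
    have hsa : s * a ∈ η := hsubη ⟨a, ha, natLe_refl _⟩
    obtain ⟨c, hc, hcv, hcs⟩ := hη.2.2.2 v hv (s * a) hsa
    have hmemξ : star s * c ∈ ξ := by
      rw [← hpη]; exact ⟨c, hc, natLe_refl _⟩
    refine ⟨star s * c, hmemξ, ?_⟩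
    rw [absorb_of_le_mul hcs]
    exact hcv
  refine ⟨hult, ?_⟩
  rintro v ⟨r, hr, hrv⟩
  refine ⟨r, hr, ?_⟩
  have h1 : natLe (s * star s * (s * r)) (s * star s * v) := natLe_mul_left _ hrv
  rw [← mul_assoc, sms] at h1
  exact h1

/-- λ_{s⋆} ∘ λ_s = id on Ω_{s⋆s} -/
lemma lambda_inv {s : S} {ξ : Set S} (hξ : ξ ∈ OmegaE (star s * s)) :
    lambdaMap (star s) (lambdaMap s ξ) = ξ := by
  ext w
  constructor
  · rintro ⟨v, ⟨r, hr, hrv⟩, hvw⟩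
    have h1 : natLe (star s * (s * r)) (star s * v) := natLe_mul_left _ hrv
    have h2 : natLe (star s * (s * r)) w := natLe_trans h1 hvw
    have h3 : star s * (s * r) ∈ ξ := by rw [← mul_assoc]; exact hξ.2 r hr
    exact hξ.1.1.2.2.1 _ h3 w h2
  · intro hw
    refine ⟨s * (star s * s * w), ⟨star s * s * w, hξ.2 w hw, natLe_refl _⟩, ?_⟩
    have key : star s * (s * (star s * s * w)) = star s * s * w := by
      simp only [mul_assoc]; rw [sss' s]
    rw [key]
    exact idem_mul_le (idem_star_mul s) w

end ISW


namespace ISW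

/-- density transfers Ω-membership -/
lemma omega_sub_of_dense {x y : S} (hx : IsIdempotentElem x) (hy : IsIdempotentElem y)
    (hd : DenseIn (x * y) x) : OmegaE x ⊆ OmegaE y := by
  intro ξ hξ
  apply mem_omega_of_ne_zero hξ.1 hy
  intro u hu hyu0
  have hxu : x * u ∈ ξ := hξ.2 u hu
  have hxune : x * u ≠ 0 := mem_ne_zero hξ.1.1 hxu
  apply hxune
  have hsu : star u * y = 0 := by
    have h' := congrArg star hyu0
    rwa [star_mul, star_of_idem hy, star_zero] at h'
  have hstar : star (x * u) = star u * x := by rw [star_mul, star_of_idem hx]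
  have hzidem : IsIdempotentElem (x * u * star (x * u)) := idem_mul_star _
  have hzx : (x * u * star (x * u)) * x = x * u * star (x * u) := by
    rw [hstar]; simp only [mul_assoc]; rw [hx.eq]
  have hzxy : (x * u * star (x * u)) * (x * y) = 0 := by
    rw [hstar]
    simp only [mul_assoc]
    rw [midem hx, idem_comm hx hy, ← mul_assoc (star u) y x, hsu, zmul, mulz, mulz]
  have hz0 := hd _ hzidem hzx hzxy
  calc x * u = x * u * star (x * u) * (x * u) := (sms _).symm
    _ = 0 := by rw [hz0, zmul]

/-- λ agreement from the algebraic identity -/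
lemma lambda_eq_of_inter {s t : S} (hst : s * (star t * t) = t * (star s * s))
    {ξ : Set S} (hxm : ∀ u ∈ ξ, (star s * s) * u ∈ ξ) (hym : ∀ u ∈ ξ, (star t * t) * u ∈ ξ) :
    lambdaMap s ξ = lambdaMap t ξ := by
  have key : ∀ s' t' : S, s' * (star t' * t') = t' * (star s' * s') →
      (∀ u ∈ ξ, (star s' * s') * u ∈ ξ) → lambdaMap s' ξ ⊆ lambdaMap t' ξ := by
    intro s' t' hst' hxm'
    rintro u ⟨r, hr, hru⟩
    refine ⟨(star s' * s') * r, hxm' r hr, ?_⟩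
    have h1 : t' * ((star s' * s') * r) = s' * ((star t' * t') * r) := by
      rw [← mul_assoc, ← hst', mul_assoc]
    rw [h1]
    exact natLe_trans (natLe_mul_left s' (idem_mul_le (idem_star_mul t') r)) hru
  exact Set.Subset.antisymm (key s t hst hxm) (key t s hst.symm hym)

/-- Ω-inclusion yields density -/
lemma dense_of_omega_sub {x y : S} (hx : IsIdempotentElem x) (hy : IsIdempotentElem y)
    (hsub : OmegaE x ⊆ OmegaE y) : DenseIn (x * y) x := by
  intro z hz hzx hz0
  by_contra hzne
  obtain ⟨ξ, hξ, hzξ⟩ := exists_ultra hzne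
  have hξz : ξ ∈ OmegaE z := ultra_mem_omega_of_idem hξ hz hzξ
  have hzlex : natLe z x := (idem_le_iff hz).mpr (by rw [idem_comm hx hz]; exact hzx)
  have hξx : ξ ∈ OmegaE x := omega_mono hz hzlex hξz
  have hξy : ξ ∈ OmegaE y := hsub hξx
  have h1 : y * z ∈ ξ := hξy.2 z hzξ
  have h2 : x * (y * z) ∈ ξ := hξx.2 _ h1
  have h3 : x * (y * z) = 0 := by
    rw [← mul_assoc, idem_comm (idem_mul hx hy) hz]
    exact hz0
  exact hξ.1.2.1 (h3 ▸ h2)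

/-- the main continuity argument: condition (1) gives `s t⋆t = t s⋆s` -/
lemma eq_of_main (hcont : ∀ s t : S, EssEq s t → s = t) {s t : S}
    (hΩ : OmegaE (star s * s) = OmegaE (star t * t))
    (hlam : ∀ ξ ∈ OmegaE (star s * s), lambdaMap s ξ = lambdaMap t ξ) :
    s * (star t * t) = t * (star s * s) := by
  have hx : IsIdempotentElem (star s * s) := idem_star_mul s
  have hy : IsIdempotentElem (star t * t) := idem_star_mul t
  have key1 : star (s * (star t * t)) * (s * (star t * t)) =
      (star s * s) * (star t * t) := by
    rw [star_mul, star_of_idem hy]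
    simp only [mul_assoc]
    rw [comm22 (idem_comm hy hx), sss' t]
  have key2 : star (t * (star s * s)) * (t * (star s * s)) =
      (star s * s) * (star t * t) := by
    rw [star_mul, star_of_idem hx]
    simp only [mul_assoc]
    rw [comm22e (idem_comm hy hx), sss' s]
  apply hcont
  refine ⟨key1.trans key2.symm, ?_⟩
  intro f hf hfne hff
  rw [key1] at hff
  have hfx : f * (star s * s) = f := by
    have haux : f * ((star s * s) * (star t * t)) * (star s * s) =
        f * ((star s * s) * (star t * t)) := by
      simp only [mul_assoc]
      rw [comm22e (idem_comm hy hx), sss' s]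
    rw [hff] at haux
    exact haux
  have hflex : natLe f (star s * s) :=
    (idem_le_iff hf).mpr (by rw [idem_comm hx hf]; exact hfx)
  obtain ⟨ξ, hξu, hfξ⟩ := exists_ultra hfne
  have hξf : ξ ∈ OmegaE f := ultra_mem_omega_of_idem hξu hf hfξ
  have hξx : ξ ∈ OmegaE (star s * s) := omega_mono hf hflex hξf
  have hsf : s * f ∈ lambdaMap t ξ := by
    rw [← hlam ξ hξx]; exact ⟨f, hfξ, natLe_refl _⟩
  obtain ⟨r, hr, hrsf⟩ := hsf
  obtain ⟨g, hg, hgr, hgf⟩ := hξu.1.2.2.2 r hr f hfξ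
  have hgidem : IsIdempotentElem g := le_idem_idem hf hgf
  have hgne : g ≠ 0 := mem_ne_zero hξu.1 hg
  have hfg : f * g = g := idem_mul_of_le hf hgf
  have hfxy : natLe f ((star s * s) * (star t * t)) :=
    (idem_le_iff hf).mpr (by rw [idem_comm (idem_mul hx hy) hf]; exact hff)
  have hgley : natLe g (star t * t) :=
    natLe_trans (natLe_trans hgf hfxy) (idem_mul_le hx _)
  have hglex : natLe g (star s * s) :=
    natLe_trans (natLe_trans hgf hfxy) (mul_idem_le hy _)
  have hyg : (star t * t) * g = g := idem_mul_of_le hy hgley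
  have hxg : (star s * s) * g = g := idem_mul_of_le hx hglex
  have htg : natLe (t * g) (s * f) := natLe_trans (natLe_mul_left t hgr) hrsf
  have hsg : s * g = t * g := by
    have h1 : s * f * star (t * g) * (t * g) = t * g := htg
    rw [star_mul, star_of_idem hgidem] at h1
    simp only [mul_assoc] at h1
    rw [show star t * (t * g) = g from by rw [← mul_assoc]; exact hyg] at h1
    rw [show (g : S) * g = g from hgidem.eq, hfg] at h1
    exact h1
  refine ⟨g, hgidem, hgne, ?_, ?_⟩
  · rw [idem_comm hgidem hf]; exact hfg
  · rw [mul_assoc, hyg, mul_assoc, hxg]; exact hsg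

/-- condition (1) is invariant under taking stars -/
lemma main_star {s t : S}
    (h1 : OmegaE (star s * s) = OmegaE (star t * t))
    (h2 : ∀ ξ ∈ OmegaE (star s * s), lambdaMap s ξ = lambdaMap t ξ) :
    OmegaE (s * star s) = OmegaE (t * star t) ∧
      ∀ η ∈ OmegaE (s * star s), lambdaMap (star s) η = lambdaMap (star t) η := by
  have keyS : ∀ η ∈ OmegaE (s * star s), lambdaMap (star s) η ∈ OmegaE (star s * s) ∧
      lambdaMap s (lambdaMap (star s) η) = η := by
    intro η hη
    have hη' : η ∈ OmegaE (star (star s) * star s) := by rwa [star_star]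
    have l1 := lambda_ultra hη'
    have l2 := lambda_inv hη'
    rw [star_star] at l1 l2
    exact ⟨l1, l2⟩
  have keyT : ∀ η ∈ OmegaE (t * star t), lambdaMap (star t) η ∈ OmegaE (star t * t) ∧
      lambdaMap t (lambdaMap (star t) η) = η := by
    intro η hη
    have hη' : η ∈ OmegaE (star (star t) * star t) := by rwa [star_star]
    have l1 := lambda_ultra hη'
    have l2 := lambda_inv hη'
    rw [star_star] at l1 l2
    exact ⟨l1, l2⟩
  constructor
  · apply Set.Subset.antisymm
    · intro η hη
      obtain ⟨hξmem, hback⟩ := keyS η hη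
      have hξt : lambdaMap (star s) η ∈ OmegaE (star t * t) := h1 ▸ hξmem
      have hrw : η = lambdaMap t (lambdaMap (star s) η) := by
        rw [← h2 _ hξmem]; exact hback.symm
      rw [hrw]
      exact lambda_ultra hξt
    · intro η hη
      obtain ⟨hξmem, hback⟩ := keyT η hη
      have hξs : lambdaMap (star t) η ∈ OmegaE (star s * s) := h1.symm ▸ hξmem
      have hrw : η = lambdaMap s (lambdaMap (star t) η) := by
        rw [h2 _ hξs]; exact hback.symm
      rw [hrw]
      exact lambda_ultra hξs
  · intro η hη
    obtain ⟨hξmem, hback⟩ := keyS η hη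
    have hξt : lambdaMap (star s) η ∈ OmegaE (star t * t) := h1 ▸ hξmem
    have hη2 : η = lambdaMap t (lambdaMap (star s) η) := by
      rw [← h2 _ hξmem]; exact hback.symm
    conv_rhs => rw [hη2]
    exact (lambda_inv hξt).symm

/-- condition (1) ↔ condition (2) -/
lemma main_iff_cond2 (hcont : ∀ s t : S, EssEq s t → s = t) (s t : S) :
    (OmegaE (star s * s) = OmegaE (star t * t) ∧
        ∀ ξ ∈ OmegaE (star s * s), lambdaMap s ξ = lambdaMap t ξ) ↔
      (s * (star t * t) = t * (star s * s) ∧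
        DenseIn (star s * s * (star t * t)) (star s * s) ∧
        DenseIn (star s * s * (star t * t)) (star t * t)) := by
  have hx : IsIdempotentElem (star s * s) := idem_star_mul s
  have hy : IsIdempotentElem (star t * t) := idem_star_mul t
  constructor
  · rintro ⟨h1, h2⟩
    refine ⟨eq_of_main hcont h1 h2, ?_, ?_⟩
    · exact dense_of_omega_sub hx hy (le_of_eq h1)
    · have hd := dense_of_omega_sub hy hx (le_of_eq h1.symm)
      rwa [idem_comm hy hx] at hd
  · rintro ⟨heq, hdx, hdy⟩
    have hdy' : DenseIn (star t * t * (star s * s)) (star t * t) := by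
      rwa [idem_comm hy hx]
    have hΩ : OmegaE (star s * s) = OmegaE (star t * t) :=
      Set.Subset.antisymm (omega_sub_of_dense hx hy hdx) (omega_sub_of_dense hy hx hdy')
    refine ⟨hΩ, fun ξ hξx => ?_⟩
    have hξy : ξ ∈ OmegaE (star t * t) := hΩ ▸ hξx
    exact lambda_eq_of_inter heq hξx.2 hξy.2

end ISW

theorem tight_not_faithful_characterization
    (hcont : ∀ s t : S, EssEq s t → s = t) (s t : S) :
    ((OmegaE (star s * s) = OmegaE (star t * t) ∧
        ∀ ξ ∈ OmegaE (star s * s), lambdaMap s ξ = lambdaMap t ξ) ↔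
      (s * (star t * t) = t * (star s * s) ∧
        DenseIn (star s * s * (star t * t)) (star s * s) ∧
        DenseIn (star s * s * (star t * t)) (star t * t))) ∧
    ((OmegaE (star s * s) = OmegaE (star t * t) ∧
        ∀ ξ ∈ OmegaE (star s * s), lambdaMap s ξ = lambdaMap t ξ) ↔
      (t * star t * s = s * star s * t ∧
        DenseIn (s * star s * (t * star t)) (s * star s) ∧
        DenseIn (s * star s * (t * star t)) (t * star t))) := by
  constructor
  · exact ISW.main_iff_cond2 hcont s t
  · have base := ISW.main_iff_cond2 hcont (star s) (star t)
    simp only [ISW.star_star] at base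
    constructor
    · rintro ⟨h1, h2⟩
      obtain ⟨g1, g2⟩ := ISW.main_star h1 h2
      obtain ⟨hs, hd1, hd2⟩ := base.mp ⟨g1, g2⟩
      refine ⟨?_, hd1, hd2⟩
      have h' := congrArg star hs
      simp only [ISW.star_mul, ISW.star_star] at h'
      exact h'
    · rintro ⟨heq, hd1, hd2⟩
      have hs : star s * (t * star t) = star t * (s * star s) := by
        have h' := congrArg star heq
        simp only [ISW.star_mul, ISW.star_star] at h'
        exact h'
      obtain ⟨g1, g2⟩ := base.mpr ⟨hs, hd1, hd2⟩
      have g1' : OmegaE (star (star s) * star s) = OmegaE (star (star t) * star t) := by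
        simp only [ISW.star_star]; exact g1
      have g2' : ∀ ξ ∈ OmegaE (star (star s) * star s),
          lambdaMap (star s) ξ = lambdaMap (star t) ξ := by
        simp only [ISW.star_star]; exact g2
      have hfin := ISW.main_star g1' g2'
      simp only [ISW.star_star] at hfin
      exact hfin
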